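/- Define F_{τˡ|l}(T−t|y) := Ϝ_{T−t}ˡ(y)/Ϝ_∞ˡ(y) with Ϝ_vˡ(y) = ∫₀^v ∏_{m≠l}(1 − Fᵐ(s+yᵐ)) fˡ(s+yˡ) ds. Then along the joint direction (t,y) ↦ (t+ε, y+ε·1), D_{t,y} F_{τˡ|l}(T−t|y) = f_{τˡ|l}(0|y) · (F_{τˡ|l}(T−t|y) − 1), where f_{τˡ|l}(0|y) = Ϝ'₀ˡ(y)/Ϝ_∞ˡ(y) and Ϝ'_vˡ(y) = ∏_{m≠l}(1 − Fᵐ(v+yᵐ)) fˡ(v+yˡ). -/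

import Mathlib

/-!
With `g u = ∏_{m ≠ l} (1 - Fᵐ(u + yᵐ)) fˡ(u + yˡ)`, moving along `(t, y) ↦ (t + ε, y + ε·1)`
only shifts the integration variable, so the quotient becomes `(∫_ε^{T-t} g) / (∫_ε^∞ g)`.
Numerator and denominator both lose their lower endpoint at rate `g 0 = Ϝ'₀ˡ(y)`, and the
quotient rule gives `g 0 / D · (N / D - 1)` with `N = Ϝ_{T-t}ˡ(y)`, `D = Ϝ_∞ˡ(y)`.
-/

open MeasureTheory Set

theorem setIntegral_Ioi_comp_add_right (g : ℝ → ℝ) (a c : ℝ) :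
    ∫ s in Ioi a, g (s + c) = ∫ u in Ioi (a + c), g u := by
  have h := (measurePreserving_add_right volume c).setIntegral_preimage_emb
    (MeasurableEquiv.addRight c).measurableEmbedding g (Ioi (a + c))
  rwa [preimage_add_const_Ioi, add_sub_cancel_right] at h

theorem hasDerivAt_integral_Ioi {g : ℝ → ℝ} {a : ℝ} (hg : Continuous g)
    (hi : IntegrableOn g (Ioi a)) :
    HasDerivAt (fun x => ∫ u in Ioi x, g u) (-g a) a := by
  have hsplit :
      (fun x => ∫ u in Ioi x, g u) = fun x => (∫ u in x..a, g u) + ∫ u in Ioi a, g u :=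
    funext fun x =>
      (intervalIntegral.integral_interval_add_Ioi' (hg.intervalIntegrable x a) hi).symm
  rw [hsplit]
  exact (intervalIntegral.integral_hasDerivAt_left (hg.intervalIntegrable a a)
    (hg.stronglyMeasurableAtFilter _ _) hg.continuousAt).add_const _

theorem hasDerivAt_intervalIntegral_div_integral_Ioi {g : ℝ → ℝ} {a : ℝ} (hg : Continuous g)
    (hD : ∫ u in Ioi a, g u ≠ 0) (c : ℝ) :
    HasDerivAt (fun x => (∫ u in x..c, g u) / ∫ u in Ioi x, g u)
      (g a / (∫ u in Ioi a, g u) * ((∫ u in a..c, g u) / (∫ u in Ioi a, g u) - 1)) a := by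
  have hN : HasDerivAt (fun x => ∫ u in x..c, g u) (-g a) a :=
    intervalIntegral.integral_hasDerivAt_left (hg.intervalIntegrable a c)
      (hg.stronglyMeasurableAtFilter _ _) hg.continuousAt
  have hD' := hasDerivAt_integral_Ioi hg (Integrable.of_integral_ne_zero hD)
  refine (hN.fun_div hD' hD).congr_deriv ?_
  field_simp
  ring

theorem stmt_19_general (n : ℕ) (l : Fin (n+1)) (F f : Fin (n+1) → ℝ → ℝ)
    (hderiv : ∀ m x, HasDerivAt (F m) (f m x) x)
    (hcont : ∀ m, Continuous (f m))
    (y : Fin (n+1) → ℝ) (t T : ℝ)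
    (hden : 0 < ∫ s in Set.Ioi (0:ℝ),
        (∏ m ∈ Finset.univ.erase l, (1 - F m (s + y m))) * f l (s + y l)) :
    HasDerivAt
      (fun ε =>
        (∫ s in (0:ℝ)..(T - (t + ε)),
            (∏ m ∈ Finset.univ.erase l, (1 - F m (s + (y m + ε)))) * f l (s + (y l + ε)))
          / ∫ s in Set.Ioi (0:ℝ),
              (∏ m ∈ Finset.univ.erase l, (1 - F m (s + (y m + ε)))) * f l (s + (y l + ε)))
      (((∏ m ∈ Finset.univ.erase l, (1 - F m (y m))) * f l (y l)
          / ∫ s in Set.Ioi (0:ℝ),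
              (∏ m ∈ Finset.univ.erase l, (1 - F m (s + y m))) * f l (s + y l))
        * ((∫ s in (0:ℝ)..(T - t),
              (∏ m ∈ Finset.univ.erase l, (1 - F m (s + y m))) * f l (s + y l))
            / (∫ s in Set.Ioi (0:ℝ),
                (∏ m ∈ Finset.univ.erase l, (1 - F m (s + y m))) * f l (s + y l))
          - 1)) 0 := by
  set g : ℝ → ℝ := fun u =>
    (∏ m ∈ Finset.univ.erase l, (1 - F m (u + y m))) * f l (u + y l)
  have hFc : ∀ m, Continuous (F m) := fun m =>
    Differentiable.continuous fun x => (hderiv m x).differentiableAt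
  have hgc : Continuous g := by fun_prop
  have hshift : ∀ ε s, (∏ m ∈ Finset.univ.erase l, (1 - F m (s + (y m + ε))))
      * f l (s + (y l + ε)) = g (s + ε) := by
    intro ε s
    simp only [g, add_assoc, add_comm ε]
  simp only [hshift, intervalIntegral.integral_comp_add_right, setIntegral_Ioi_comp_add_right,
    zero_add, ← sub_sub, sub_add_cancel]
  convert hasDerivAt_intervalIntegral_div_integral_Ioi hgc hden.ne' (T - t) using 3
  simp [g]

/-- For `F_{τˡ|l}(T−t|y) = Ϝ_{T−t}ˡ(y)/Ϝ_∞ˡ(y)`, the derivative along the joint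
direction `(t,y) ↦ (t+ε, y+ε·1)` is `f_{τˡ|l}(0|y) · (F_{τˡ|l}(T−t|y) − 1)`, where
`f_{τˡ|l}(0|y) = Ϝ'₀ˡ(y)/Ϝ_∞ˡ(y)`. -/
theorem stmt_19 (n : ℕ) (l : Fin (n+1)) (F f : Fin (n+1) → ℝ → ℝ)
    (hderiv : ∀ m x, HasDerivAt (F m) (f m x) x)
    (hcont : ∀ m, Continuous (f m))
    (hfnn : ∀ m x, 0 ≤ f m x)
    (hF0 : ∀ m x, 0 ≤ F m x) (hF1 : ∀ m x, F m x ≤ 1)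
    (y : Fin (n+1) → ℝ) (t T : ℝ) (htT : t ≤ T)
    (hden : 0 < ∫ s in Set.Ioi (0:ℝ),
        (∏ m ∈ Finset.univ.erase l, (1 - F m (s + y m))) * f l (s + y l)) :
    HasDerivAt
      (fun ε =>
        (∫ s in (0:ℝ)..(T - (t + ε)),
            (∏ m ∈ Finset.univ.erase l, (1 - F m (s + (y m + ε)))) * f l (s + (y l + ε)))
          / ∫ s in Set.Ioi (0:ℝ),
              (∏ m ∈ Finset.univ.erase l, (1 - F m (s + (y m + ε)))) * f l (s + (y l + ε)))
      (((∏ m ∈ Finset.univ.erase l, (1 - F m (y m))) * f l (y l)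
          / ∫ s in Set.Ioi (0:ℝ),
              (∏ m ∈ Finset.univ.erase l, (1 - F m (s + y m))) * f l (s + y l))
        * ((∫ s in (0:ℝ)..(T - t),
              (∏ m ∈ Finset.univ.erase l, (1 - F m (s + y m))) * f l (s + y l))
            / (∫ s in Set.Ioi (0:ℝ),
                (∏ m ∈ Finset.univ.erase l, (1 - F m (s + y m))) * f l (s + y l))
          - 1)) 0 :=
  stmt_19_general n l F f hderiv hcont y t T hden
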